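/- arXiv:1809.04726 — 2 statements merged into one kernel-verified Lean document; each statement's English description precedes it below -/
import Mathlib

section
/- Let u ∈ ℝ^d and let λ_1 ≥ λ_2 ≥ ⋯ ≥ λ_d ≥ 0. Define x ∈ ℝ^d by x_k = u_k² and y ∈ ℝ^d by y_k = λ_k² u_k² / (∑_{m=1}^d λ_m² u_m²), normalized so that ∑ y_k = ∑ x_k (i.e., y_k = (∑_m u_m²) · λ_k² u_k² / (∑_m λ_m² u_m²)). Assume ∑_m λ_m² u_m² > 0. Then y ⪰ x, i.e., for every 1 ≤ j ≤ d, ∑_{k=1}^j y_k ≥ ∑_{k=1}^j x_k, and ∑_{k=1}^d y_k = ∑_{k=1}^d x_k. -/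
/-!
Write `w k = u k ^ 2` and `f k = lam k ^ 2`, so `f` is nonincreasing. The majorization inequality
for the first `j` coordinates is `(∑_{k<j} w) (∑_{k<d} f w) ≤ (∑_{k<d} w) (∑_{k<j} f w)`. Splitting
`range d` into `range j` and `Ico j d`, this reduces to comparing the cross terms
`w k * w m * f m ≤ w k * w m * f k` for `k < j ≤ m`, which holds termwise since `f m ≤ f k`.
-/

open Finset

lemma sum_mul_sum_mul_le_sum_mul_sum_mul {ι : Type*} (s t : Finset ι) (w f : ι → ℝ)
    (hws : ∀ i ∈ s, 0 ≤ w i) (hwt : ∀ j ∈ t, 0 ≤ w j) (hf : ∀ i ∈ s, ∀ j ∈ t, f j ≤ f i) :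
    (∑ i ∈ s, w i) * ∑ j ∈ t, f j * w j ≤ (∑ j ∈ t, w j) * ∑ i ∈ s, f i * w i := by
  rw [sum_mul_sum, sum_mul_sum, sum_comm (s := t)]
  refine sum_le_sum fun i hi => sum_le_sum fun j hj => ?_
  have := mul_le_mul_of_nonneg_left (hf i hi j hj) (mul_nonneg (hws i hi) (hwt j hj))
  linarith

lemma sum_range_mul_sum_range_mul_le_of_antitone {d j : ℕ} (hjd : j ≤ d) (w f : ℕ → ℝ)
    (hw : ∀ k < d, 0 ≤ w k) (hf : ∀ i k, i ≤ k → k < d → f k ≤ f i) :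
    (∑ k ∈ range j, w k) * ∑ k ∈ range d, f k * w k
      ≤ (∑ k ∈ range d, w k) * ∑ k ∈ range j, f k * w k := by
  have cross := sum_mul_sum_mul_le_sum_mul_sum_mul (range j) (Ico j d) w f
    (fun k hk => hw k ((mem_range.mp hk).trans_le hjd)) (fun k hk => hw k (mem_Ico.mp hk).2)
    (fun i hi k hk => hf i k (by simp only [mem_range, mem_Ico] at hi hk; omega)
      (mem_Ico.mp hk).2)
  rw [← sum_range_add_sum_Ico _ hjd, ← sum_range_add_sum_Ico _ hjd]
  linarith

theorem majorization_after_scaling (d : ℕ) (u lam : ℕ → ℝ)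
    (hmono : ∀ i j, i ≤ j → j < d → lam j ≤ lam i)
    (hnonneg : ∀ i < d, 0 ≤ lam i)
    (hpos : 0 < ∑ m ∈ Finset.range d, lam m ^ 2 * u m ^ 2)
    (x y : ℕ → ℝ)
    (hx : ∀ k, x k = u k ^ 2)
    (hy : ∀ k, y k = (∑ m ∈ Finset.range d, u m ^ 2) * (lam k ^ 2 * u k ^ 2) /
      (∑ m ∈ Finset.range d, lam m ^ 2 * u m ^ 2)) :
    (∀ j, 1 ≤ j → j ≤ d →
      ∑ k ∈ Finset.range j, x k ≤ ∑ k ∈ Finset.range j, y k) ∧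
    ∑ k ∈ Finset.range d, y k = ∑ k ∈ Finset.range d, x k := by
  have sum_y : ∀ s : Finset ℕ, ∑ k ∈ s, y k = (∑ m ∈ range d, u m ^ 2) *
      (∑ k ∈ s, lam k ^ 2 * u k ^ 2) / ∑ m ∈ range d, lam m ^ 2 * u m ^ 2 := fun s => by
    simp only [hy, ← sum_div, ← mul_sum]
  have hsq_anti : ∀ i k, i ≤ k → k < d → lam k ^ 2 ≤ lam i ^ 2 := fun i k hik hkd =>
    pow_le_pow_left₀ (hnonneg k hkd) (hmono i k hik hkd) 2
  refine ⟨fun j _ hjd => ?_, ?_⟩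
  · rw [sum_y, le_div_iff₀ hpos]
    simpa only [hx] using sum_range_mul_sum_range_mul_le_of_antitone hjd (fun k => u k ^ 2)
      (fun k => lam k ^ 2) (fun k _ => sq_nonneg (u k)) hsq_anti
  · rw [sum_y, mul_div_cancel_right₀ _ hpos.ne']
    simp only [hx]
end

section
/- Let u_1, …, u_n ∈ ℝ^d be nonzero with ∑_i u_i u_iᵀ ⪯ (1+4ε)I, and suppose M = diag(λ) with λ_1 ≥ ⋯ ≥ λ_d ≥ 0 satisfies ∑_i (d/n)(Mu_i/‖Mu_i‖)(Mu_i/‖Mu_i‖)ᵀ = I, with (1−γ)(d/n) ≤ ‖u_i‖² ≤ (1+γ)(d/n) for all i. Define w̃_i = ‖u_i‖ · Mu_i/‖Mu_i‖. Then ∑_{i=1}^n ‖u_i − w̃_i‖² ≤ (4ε + γ)·d(d+1) ≤ 2(4ε+γ)d². -/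
/-!
Write `w̃ i j = x i j * u i j` with `x i j = ‖u i‖ / ‖M u i‖ * λ j`, which is nonnegative and
nonincreasing in `j`, and set `e i j = w̃ i j ^ 2 - u i j ^ 2`. Since `‖w̃ i‖ = ‖u i‖`, every row
of `e` sums to zero, and it changes sign once, from `+` to `-`. By the upper bound on `∑ uᵢuᵢᵀ`
and the isotropy of the normalized `M uᵢ`, every column satisfies `∑ i, -e i j ≤ 4ε + γ`.

Using `∑ j, w̃ i j ^ 2 = ∑ j, u i j ^ 2`, we get `‖u i - w̃ i‖² = 2 ∑ j, u i j ^ 2 (1 - x i j)`, and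
each term is at most `(e i j)⁻`. For a zero-sum row that changes sign at `k`, the negative part is
at most `∑ j, (j - k + 1) (-e i j) = ∑ j, j (-e i j)`. Summing over `i` and using the column bound
gives `∑ i j, (e i j)⁻ ≤ (4ε + γ) d (d - 1) / 2`.
-/

noncomputable def eucNorm {d : ℕ} (v : Fin d → ℝ) : ℝ := Real.sqrt (∑ j, v j ^ 2)

open Finset

theorem exists_threshold_of_antitone {d : ℕ} {α : Type*} [LinearOrder α] {f : Fin d → α}
    (hf : Antitone f) (c : α) :
    ∃ k : ℕ, ∀ j : Fin d, ((j : ℕ) < k → c ≤ f j) ∧ (k ≤ (j : ℕ) → f j ≤ c) := by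
  classical
  have hex : ∃ k : ℕ, ∀ j : Fin d, k ≤ (j : ℕ) → f j ≤ c :=
    ⟨d, fun j hj => absurd j.isLt (by omega)⟩
  refine ⟨Nat.find hex, fun j => ⟨fun hj => ?_, Nat.find_spec hex j⟩⟩
  obtain ⟨j', hjj', hj'⟩ : ∃ j' : Fin d, (j : ℕ) ≤ j' ∧ c < f j' := by
    simpa using Nat.find_min hex hj
  exact (hj'.trans_le (hf hjj')).le

theorem sum_negPart_le_sum_mul_neg {d : ℕ} (e : Fin d → ℝ) (hsum : ∑ j, e j = 0) (k : ℕ)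
    (hpos : ∀ j : Fin d, (j : ℕ) < k → 0 ≤ e j) (hneg : ∀ j : Fin d, k ≤ (j : ℕ) → e j ≤ 0) :
    ∑ j, (e j)⁻ ≤ ∑ j : Fin d, ((j : ℕ) : ℝ) * -e j := by
  have key : ∀ j : Fin d, (e j)⁻ ≤ ((j : ℝ) - (k - 1)) * -e j := by
    intro j
    rcases lt_or_ge (j : ℕ) k with hj | hj
    · have : (j : ℝ) + 1 ≤ k := by exact_mod_cast hj
      rw [negPart_eq_zero.2 (hpos j hj)]
      nlinarith [hpos j hj]
    · have : (k : ℝ) ≤ j := by exact_mod_cast hj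
      rw [negPart_eq_neg.2 (hneg j hj)]
      nlinarith [hneg j hj]
  calc ∑ j, (e j)⁻ ≤ ∑ j : Fin d, (((j : ℕ) : ℝ) - (k - 1)) * -e j := sum_le_sum fun j _ => key j
    _ = ∑ j : Fin d, ((j : ℕ) : ℝ) * -e j := by simp [sub_mul, sum_sub_distrib, ← mul_sum, hsum]

theorem sum_sum_negPart_le {ι : Type*} [Fintype ι] {d : ℕ} (e : ι → Fin d → ℝ) (β : ℝ)
    (hrow : ∀ i, ∑ j, e i j = 0)
    (hsign : ∀ i, ∃ k : ℕ, ∀ j : Fin d, ((j : ℕ) < k → 0 ≤ e i j) ∧ (k ≤ (j : ℕ) → e i j ≤ 0))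
    (hcol : ∀ j, ∑ i, -e i j ≤ β) :
    ∑ i, ∑ j, (e i j)⁻ ≤ β * ∑ j : Fin d, ((j : ℕ) : ℝ) := by
  calc ∑ i, ∑ j, (e i j)⁻ ≤ ∑ i, ∑ j : Fin d, ((j : ℕ) : ℝ) * -e i j := sum_le_sum fun i _ => by
        obtain ⟨k, hk⟩ := hsign i
        exact sum_negPart_le_sum_mul_neg _ (hrow i) k (fun j => (hk j).1) (fun j => (hk j).2)
    _ = ∑ j : Fin d, ((j : ℕ) : ℝ) * ∑ i, -e i j := by rw [sum_comm]; simp only [mul_sum]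
    _ ≤ ∑ j : Fin d, ((j : ℕ) : ℝ) * β :=
        sum_le_sum fun j _ => mul_le_mul_of_nonneg_left (hcol j) (Nat.cast_nonneg _)
    _ = β * ∑ j : Fin d, ((j : ℕ) : ℝ) := by rw [mul_sum]; simp only [mul_comm]

theorem two_mul_sum_fin_val (d : ℕ) : 2 * ∑ j : Fin d, ((j : ℕ) : ℝ) = d * (d - 1) := by
  induction d with
  | zero => simp
  | succ d ih =>
    rw [Fin.sum_univ_castSucc]
    simp only [Fin.val_castSucc, Fin.val_last]
    push_cast
    linarith

theorem sum_sq_sub_mul_le {ι : Type*} [Fintype ι] (a x : ι → ℝ) (hx : ∀ j, 0 ≤ x j)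
    (hnorm : ∑ j, (x j * a j) ^ 2 = ∑ j, a j ^ 2) :
    ∑ j, (a j - x j * a j) ^ 2 ≤ 2 * ∑ j, ((x j * a j) ^ 2 - a j ^ 2)⁻ := by
  have key : ∀ j, a j ^ 2 * (1 - x j) ≤ ((x j * a j) ^ 2 - a j ^ 2)⁻ := by
    intro j
    rcases le_total (x j) 1 with h | h
    · refine le_trans ?_ (neg_le_negPart _)
      nlinarith [mul_nonneg (mul_nonneg (hx j) (sub_nonneg.2 h)) (sq_nonneg (a j))]
    · exact (mul_nonpos_of_nonneg_of_nonpos (sq_nonneg _) (by linarith)).trans (negPart_nonneg _)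
  calc ∑ j, (a j - x j * a j) ^ 2
      = 2 * ∑ j, a j ^ 2 * (1 - x j) - (∑ j, a j ^ 2 - ∑ j, (x j * a j) ^ 2) := by
        rw [mul_sum, ← sum_sub_distrib, ← sum_sub_distrib]
        exact sum_congr rfl fun j _ => by ring
    _ ≤ 2 * ∑ j, ((x j * a j) ^ 2 - a j ^ 2)⁻ := by
        rw [hnorm, sub_self, sub_zero]
        gcongr with j
        exact key j

theorem sum_sum_sq_sub_mul_le {ι : Type*} [Fintype ι] {d : ℕ} (u x : ι → Fin d → ℝ) (β : ℝ)
    (hx : ∀ i j, 0 ≤ x i j) (hanti : ∀ i, Antitone (x i))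
    (hnorm : ∀ i, ∑ j, (x i j * u i j) ^ 2 = ∑ j, u i j ^ 2)
    (hcol : ∀ j, ∑ i, (u i j ^ 2 - (x i j * u i j) ^ 2) ≤ β) :
    ∑ i, ∑ j, (u i j - x i j * u i j) ^ 2 ≤ β * (d * (d - 1)) := by
  have hsign : ∀ i, ∃ k : ℕ, ∀ j : Fin d, ((j : ℕ) < k → 0 ≤ (x i j * u i j) ^ 2 - u i j ^ 2) ∧
      (k ≤ (j : ℕ) → (x i j * u i j) ^ 2 - u i j ^ 2 ≤ 0) := fun i => by
    obtain ⟨k, hk⟩ := exists_threshold_of_antitone (fun j j' h => pow_le_pow_left₀ (hx i j')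
      (hanti i h) 2 : Antitone fun j => x i j ^ 2) 1
    refine ⟨k, fun j => ⟨fun hj => ?_, fun hj => ?_⟩⟩
    · nlinarith [(hk j).1 hj, sq_nonneg (u i j)]
    · nlinarith [(hk j).2 hj, sq_nonneg (u i j)]
  have hrow : ∀ i, ∑ j, ((x i j * u i j) ^ 2 - u i j ^ 2) = 0 := fun i => by
    rw [sum_sub_distrib, hnorm, sub_self]
  have hneg := sum_sum_negPart_le _ β hrow hsign (by simpa only [neg_sub] using hcol)
  calc ∑ i, ∑ j, (u i j - x i j * u i j) ^ 2
      ≤ ∑ i, 2 * ∑ j, ((x i j * u i j) ^ 2 - u i j ^ 2)⁻ :=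
        sum_le_sum fun i _ => sum_sq_sub_mul_le (u i) (x i) (hx i) (hnorm i)
    _ ≤ β * (d * (d - 1)) := by rw [← mul_sum, ← two_mul_sum_fin_val]; linarith

theorem eucNorm_sq {d : ℕ} (v : Fin d → ℝ) : eucNorm v ^ 2 = ∑ j, v j ^ 2 :=
  Real.sq_sqrt (sum_nonneg fun j _ => sq_nonneg (v j))

theorem eucNorm_ne_zero {d : ℕ} {v : Fin d → ℝ} (hv : v ≠ 0) : eucNorm v ≠ 0 := by
  intro h
  apply hv
  have hsq : ∑ j, v j ^ 2 = 0 := by rw [← eucNorm_sq, h, sq, mul_zero]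
  ext j
  simpa using (sum_eq_zero_iff_of_nonneg fun j _ => sq_nonneg (v j)).1 hsq j (mem_univ j)

theorem sum_sq_mul_inv_eucNorm_smul {d : ℕ} {v : Fin d → ℝ} (hv : v ≠ 0) (c : ℝ) :
    ∑ j, (c * ((eucNorm v)⁻¹ • v) j) ^ 2 = c ^ 2 := by
  simp only [Pi.smul_apply, smul_eq_mul, mul_pow, ← mul_sum, ← eucNorm_sq, inv_pow]
  rw [inv_mul_cancel₀ (pow_ne_zero 2 (eucNorm_ne_zero hv)), mul_one]

theorem Matrix.sum_smul_vecMulVec_self_apply_self {ι : Type*} [Fintype ι] {d : ℕ} (c : ι → ℝ)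
    (v : ι → Fin d → ℝ) (j : Fin d) :
    (∑ i, c i • Matrix.vecMulVec (v i) (v i)) j j = ∑ i, c i * v i j ^ 2 := by
  simp [Matrix.sum_apply, Matrix.vecMulVec_apply, sq]

theorem sum_sq_le_of_posSemidef_sub {ι : Type*} [Fintype ι] {d : ℕ} (c : ℝ)
    (v : ι → Fin d → ℝ)
    (h : (c • (1 : Matrix (Fin d) (Fin d) ℝ) - ∑ i, Matrix.vecMulVec (v i) (v i)).PosSemidef)
    (j : Fin d) : ∑ i, v i j ^ 2 ≤ c := by
  have hdiag := h.diag_nonneg (i := j)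
  have hsum := Matrix.sum_smul_vecMulVec_self_apply_self (fun _ => (1 : ℝ)) v j
  simp only [one_smul, one_mul] at hsum
  simp only [Matrix.sub_apply, Matrix.smul_apply, Matrix.one_apply_eq, smul_eq_mul, mul_one,
    hsum] at hdiag
  linarith

theorem sum_sq_sub_sq_mul_le {ι : Type*} [Fintype ι] {d : ℕ} (u v : ι → Fin d → ℝ)
    (ρ : ι → ℝ) (A B c : ℝ) (j : Fin d) (hu : ∑ i, u i j ^ 2 ≤ A)
    (hv : ∑ i, c * v i j ^ 2 = 1) (hρ : ∀ i, B * c ≤ ρ i ^ 2) :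
    ∑ i, (u i j ^ 2 - (ρ i * v i j) ^ 2) ≤ A - B := by
  have hlower : B ≤ ∑ i, (ρ i * v i j) ^ 2 :=
    calc B = B * ∑ i, c * v i j ^ 2 := by rw [hv, mul_one]
      _ = ∑ i, B * c * v i j ^ 2 := by rw [mul_sum]; simp only [mul_assoc]
      _ ≤ ∑ i, (ρ i * v i j) ^ 2 := by
          gcongr with i
          rw [mul_pow]
          exact mul_le_mul_of_nonneg_right (hρ i) (sq_nonneg _)
  rw [sum_sub_distrib]
  linarith

theorem dist_to_radial_isotropic_general (d n : ℕ) (ε γ : ℝ) (hε : 0 ≤ ε) (hγ : 0 ≤ γ)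
    (u : Fin n → (Fin d → ℝ))
    (hupper : (((1 + 4 * ε) • (1 : Matrix (Fin d) (Fin d) ℝ)) -
      ∑ i, Matrix.vecMulVec (u i) (u i)).PosSemidef)
    (lam : Fin d → ℝ)
    (hmono : ∀ i j : Fin d, i ≤ j → lam j ≤ lam i)
    (hlam : ∀ j, 0 ≤ lam j)
    (M : Matrix (Fin d) (Fin d) ℝ) (hM : M = Matrix.diagonal lam)
    (hMu : ∀ i, M.mulVec (u i) ≠ 0)
    (hiso : ∑ i, ((d : ℝ) / n) •
        Matrix.vecMulVec ((eucNorm (M.mulVec (u i)))⁻¹ • M.mulVec (u i))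
          ((eucNorm (M.mulVec (u i)))⁻¹ • M.mulVec (u i)) =
      (1 : Matrix (Fin d) (Fin d) ℝ))
    (hlow : ∀ i, (1 - γ) * ((d : ℝ) / n) ≤ ∑ j, (u i j) ^ 2)
    (w : Fin n → (Fin d → ℝ))
    (hw : ∀ i, w i = (eucNorm (u i) * (eucNorm (M.mulVec (u i)))⁻¹) • M.mulVec (u i)) :
    ∑ i, ∑ j, (u i j - w i j) ^ 2 ≤ (4 * ε + γ) * d * (d + 1) ∧
    (4 * ε + γ) * d * (d + 1) ≤ 2 * (4 * ε + γ) * d ^ 2 := by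
  set v : Fin n → Fin d → ℝ := fun i => (eucNorm (M.mulVec (u i)))⁻¹ • M.mulVec (u i)
  set x : Fin n → Fin d → ℝ := fun i j => eucNorm (u i) * (eucNorm (M.mulVec (u i)))⁻¹ * lam j
  have hMu_apply : ∀ i j, M.mulVec (u i) j = lam j * u i j := by simp [hM, Matrix.mulVec_diagonal]
  have hwx : ∀ i j, w i j = x i j * u i j := by simp [hw, hMu_apply, x, mul_assoc]
  have hxv : ∀ i j, x i j * u i j = eucNorm (u i) * v i j := fun i j => by
    simp only [hMu_apply, x, v, Pi.smul_apply, smul_eq_mul]; ring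
  have hscale : ∀ i, 0 ≤ eucNorm (u i) * (eucNorm (M.mulVec (u i)))⁻¹ := fun i =>
    mul_nonneg (Real.sqrt_nonneg _) (inv_nonneg.2 (Real.sqrt_nonneg _))
  have hx : ∀ i j, 0 ≤ x i j := fun i j => mul_nonneg (hscale i) (hlam j)
  have hanti : ∀ i, Antitone (x i) := fun i j j' h =>
    mul_le_mul_of_nonneg_left (hmono j j' h) (hscale i)
  have hnorm : ∀ i, ∑ j, (x i j * u i j) ^ 2 = ∑ j, u i j ^ 2 := fun i => by
    simp only [hxv, v, sum_sq_mul_inv_eucNorm_smul (hMu i), eucNorm_sq]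
  have hcol : ∀ j, ∑ i, (u i j ^ 2 - (x i j * u i j) ^ 2) ≤ 4 * ε + γ := fun j => by
    have hv := congrFun (congrFun hiso j) j
    rw [Matrix.sum_smul_vecMulVec_self_apply_self, Matrix.one_apply_eq] at hv
    simp only [hxv]
    exact (sum_sq_sub_sq_mul_le u v (fun i => eucNorm (u i)) _ _ _ j
      (sum_sq_le_of_posSemidef_sub _ u hupper j) hv
      fun i => (eucNorm_sq (u i)).symm ▸ hlow i).trans_eq (by ring)
  have hβ : 0 ≤ 4 * ε + γ := by positivity
  have hd : (d : ℝ) ≤ d ^ 2 := by exact_mod_cast Nat.le_self_pow two_ne_zero d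
  have hdist := sum_sum_sq_sub_mul_le u x _ hx hanti hnorm hcol
  simp only [← hwx] at hdist
  constructor <;> nlinarith [mul_nonneg hβ d.cast_nonneg, mul_le_mul_of_nonneg_left hd hβ]

theorem dist_to_radial_isotropic (d n : ℕ) (ε γ : ℝ) (hε : 0 ≤ ε) (hγ : 0 ≤ γ)
    (u : Fin n → (Fin d → ℝ)) (hu : ∀ i, u i ≠ 0)
    (hupper : (((1 + 4 * ε) • (1 : Matrix (Fin d) (Fin d) ℝ)) -
      ∑ i, Matrix.vecMulVec (u i) (u i)).PosSemidef)
    (lam : Fin d → ℝ)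
    (hmono : ∀ i j : Fin d, i ≤ j → lam j ≤ lam i)
    (hlam : ∀ j, 0 ≤ lam j)
    (M : Matrix (Fin d) (Fin d) ℝ) (hM : M = Matrix.diagonal lam)
    (hMu : ∀ i, M.mulVec (u i) ≠ 0)
    (hiso : ∑ i, ((d : ℝ) / n) •
        Matrix.vecMulVec ((eucNorm (M.mulVec (u i)))⁻¹ • M.mulVec (u i))
          ((eucNorm (M.mulVec (u i)))⁻¹ • M.mulVec (u i)) =
      (1 : Matrix (Fin d) (Fin d) ℝ))
    (hlow : ∀ i, (1 - γ) * ((d : ℝ) / n) ≤ ∑ j, (u i j) ^ 2)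
    (hhigh : ∀ i, ∑ j, (u i j) ^ 2 ≤ (1 + γ) * ((d : ℝ) / n))
    (w : Fin n → (Fin d → ℝ))
    (hw : ∀ i, w i = (eucNorm (u i) * (eucNorm (M.mulVec (u i)))⁻¹) • M.mulVec (u i)) :
    ∑ i, ∑ j, (u i j - w i j) ^ 2 ≤ (4 * ε + γ) * d * (d + 1) ∧
    (4 * ε + γ) * d * (d + 1) ≤ 2 * (4 * ε + γ) * d ^ 2 :=
  dist_to_radial_isotropic_general d n ε γ hε hγ u hupper lam hmono hlam M hM hMu hiso hlow w hw
end
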